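/- arXiv:2010.15726 — 6 statements merged into one kernel-verified Lean document; each statement's English description precedes it below -/
import Mathlib

section
/- Let P be an orthogonal projection with 2×2 matrix (x a; a* y) relative to H = H₊ ⊕ H₋. Then the kernel of a equals the orthogonal direct sum of the kernel of y and the kernel of y - 1, i.e., N(a) = N(y) ⊕ N(y - 1). -/
/-!
Write `F = 1 - E`, `a = E P F` and `y = F P F`. Since `P` and `F` are idempotent,
`y - y² = F P (1 - F) P F = (F P E)(E P F) = a* a`, so `N(a) = N(a* a) = N(y - y²)`.
For any operator `y`, the decomposition `v = (v - y v) + y v` splits `N(y - y²)` into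
`N(y) + N(y - 1)`.
-/

theorem IsIdempotentElem.compl_corner_sub_mul_self {R : Type*} [Ring R] {p e : R}
    (hp : IsIdempotentElem p) (he : IsIdempotentElem e) :
    (1 - e) * p * (1 - e) - (1 - e) * p * (1 - e) * ((1 - e) * p * (1 - e)) =
      (1 - e) * p * e * (e * p * (1 - e)) := by
  have hf : (1 - e) * (1 - e) = 1 - e := he.one_sub.eq
  calc _ = (1 - e) * (p - p * ((1 - e) * (1 - e)) * p) * (1 - e) := by noncomm_ring
    _ = (1 - e) * (p * e * p) * (1 - e) := by rw [hf]; nth_rw 1 [← hp.eq]; noncomm_ring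
    _ = (1 - e) * p * (e * e) * p * (1 - e) := by rw [he.eq]; noncomm_ring
    _ = _ := by noncomm_ring

theorem IsStarProjection.compl_corner_sub_mul_self {R : Type*} [Ring R] [StarRing R] {p e : R}
    (hp : IsStarProjection p) (he : IsStarProjection e) :
    (1 - e) * p * (1 - e) - (1 - e) * p * (1 - e) * ((1 - e) * p * (1 - e)) =
      star (e * p * (1 - e)) * (e * p * (1 - e)) := by
  rw [hp.isIdempotentElem.compl_corner_sub_mul_self he.isIdempotentElem]
  simp [star_mul, hp.isSelfAdjoint.star_eq, he.isSelfAdjoint.star_eq, mul_assoc]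

theorem Module.End.ker_sub_mul_self {R M : Type*} [Ring R] [AddCommGroup M] [Module R M]
    (f : Module.End R M) :
    LinearMap.ker (f - f * f) = LinearMap.ker f ⊔ LinearMap.ker (f - 1) := by
  apply le_antisymm
  · intro x hx
    have hx : f x - f (f x) = 0 := hx
    rw [show x = (x - f x) + f x by abel]
    refine Submodule.add_mem_sup ?_ ?_
    · simpa [LinearMap.mem_ker] using hx
    · rw [LinearMap.mem_ker, LinearMap.sub_apply, Module.End.one_apply, sub_eq_zero]
      exact (sub_eq_zero.mp hx).symm
  · refine sup_le (fun x hx ↦ ?_) (fun x hx ↦ ?_)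
    · simp_all [LinearMap.mem_ker]
    · have hx : f x = x := sub_eq_zero.mp hx
      simp [LinearMap.mem_ker, hx]

/-- For an orthogonal projection `P` with block matrix `(x a; a* y)` relative to
`H = H₊ ⊕ H₋` (given by the projection `E`), the kernel of `a = E P (1-E)` is the
(orthogonal) direct sum of the kernel of `y = (1-E) P (1-E)` and the kernel of `y - 1`. -/
theorem stmt2 {H : Type*} [NormedAddCommGroup H] [InnerProductSpace ℂ H] [CompleteSpace H]
    (P E : H →L[ℂ] H) (hP : IsSelfAdjoint P) (hP2 : P * P = P)
    (hE : IsSelfAdjoint E) (hE2 : E * E = E) :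
    LinearMap.ker ((E * P * (1 - E) : H →L[ℂ] H) : H →ₗ[ℂ] H) =
      LinearMap.ker (((1 - E) * P * (1 - E) : H →L[ℂ] H) : H →ₗ[ℂ] H) ⊔
        LinearMap.ker (((1 - E) * P * (1 - E) - 1 : H →L[ℂ] H) : H →ₗ[ℂ] H) := by
  have hy := IsStarProjection.compl_corner_sub_mul_self ⟨hP2, hP⟩ ⟨hE2, hE⟩
  rw [ContinuousLinearMap.star_eq_adjoint] at hy
  rw [← ContinuousLinearMap.ker_adjoint_comp_self, ← ContinuousLinearMap.mul_def, ← hy]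
  push_cast
  exact Module.End.ker_sub_mul_self _
end

section
/- Let P be an orthogonal projection with block matrix (x a; a* y) relative to H = H₊ ⊕ H₋. If ξ ∈ H₋ is an eigenvector of y with eigenvalue λ where λ ≠ 0 and λ ≠ 1, then a ξ ≠ 0 and a ξ is an eigenvector of x with eigenvalue 1 - λ. -/
/-- If `P` is an orthogonal projection with block matrix `(x a; a* y)` relative to
`H = H₊ ⊕ H₋` and `ξ ∈ H₋` is an eigenvector of `y` with eigenvalue `λ ≠ 0, 1`,
then `a ξ ≠ 0` and `a ξ` is an eigenvector of `x` with eigenvalue `1 - λ`. -/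
theorem stmt3 {H : Type*} [NormedAddCommGroup H] [InnerProductSpace ℂ H] [CompleteSpace H]
    (P E : H →L[ℂ] H) (hP : IsSelfAdjoint P) (hP2 : P * P = P)
    (hE : IsSelfAdjoint E) (hE2 : E * E = E)
    (ξ : H) (hξ : ξ ≠ 0) (hξm : E ξ = 0)
    (lam : ℂ) (hl0 : lam ≠ 0) (hl1 : lam ≠ 1)
    (heig : ((1 - E) * P * (1 - E)) ξ = lam • ξ) :
    (E * P * (1 - E)) ξ ≠ 0 ∧
      (E * P * E) ((E * P * (1 - E)) ξ) = (1 - lam) • ((E * P * (1 - E)) ξ) := by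
  have hFx : (1 - E : H →L[ℂ] H) ξ = ξ := by
    simp [ContinuousLinearMap.sub_apply, hξm]
  have hPP : ∀ v : H, P (P v) = P v := fun v => by
    have := congrArg (fun T : H →L[ℂ] H => T v) hP2
    simpa using this
  have hEE : ∀ v : H, E (E v) = E v := fun v => by
    have := congrArg (fun T : H →L[ℂ] H => T v) hE2
    simpa using this
  -- key equation: P ξ = E (P ξ) + lam • ξ
  have heig' : P ξ - E (P ξ) = lam • ξ := by
    have := heig
    simpa [ContinuousLinearMap.mul_apply, ContinuousLinearMap.sub_apply,
      ContinuousLinearMap.one_apply, hξm] using this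
  have hPξ : P ξ = E (P ξ) + lam • ξ := by
    rw [← heig']; abel
  have haξ : (E * P * (1 - E)) ξ = E (P ξ) := by
    simp [ContinuousLinearMap.mul_apply, hFx]
  constructor
  · rw [haξ]
    intro h0
    have hPl : P ξ = lam • ξ := by rw [hPξ, h0, zero_add]
    have h1 : P (P ξ) = lam • (lam • ξ) := by rw [hPl, map_smul, hPl]
    rw [hPP] at h1
    rw [hPl, smul_smul] at h1
    have : (lam - lam * lam) • ξ = 0 := by
      rw [sub_smul, h1, sub_self]
    rcases smul_eq_zero.mp this with h | h
    · have : lam * (1 - lam) = 0 := by ring_nf; linear_combination h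
      rcases mul_eq_zero.mp this with h' | h'
      · exact hl0 h'
      · exact hl1 (by linear_combination -h')
    · exact hξ h
  · rw [haξ]
    -- P (E (P ξ)) = (1 - lam) • P ξ
    have h2 : P (E (P ξ)) + lam • P ξ = P ξ := by
      have := congrArg P hPξ
      rw [map_add, map_smul] at this
      rw [hPP] at this
      exact this.symm
    have h3 : P (E (P ξ)) = (1 - lam) • P ξ := by
      rw [sub_smul, one_smul]
      linear_combination (norm := module) h2
    have : (E * P * E) (E (P ξ)) = E (P (E (P ξ))) := by
      simp [ContinuousLinearMap.mul_apply, hEE]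
    rw [this, h3, map_smul, hPξ, map_add, map_smul, hEE, hξm, smul_zero, add_zero]
end

section
/- Let P be an orthogonal projection with block matrix (x a; a* y) relative to H = H₊ ⊕ H₋, and let λ ∈ (0,1) (λ ≠ 0, 1). Then the restriction of a to the eigenspace N(y - λ) is an injective map into the eigenspace N(x - (1-λ)), and consequently dim N(y - λ) ≤ dim N(x - (1-λ)). By symmetry (using a*), these eigenspaces have equal dimension. -/
/-!
Write `F = 1 - E`. Reading off the `(E, F)`-blocks of `P * P = P` gives
`(EPE)(EPF) + (EPF)(FPF) = EPF` and `(FPE)(EPF) + (FPF)² = FPF`. The first shows that `EPF`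
carries the `λ`-eigenspace of `FPF` into the `(1 - λ)`-eigenspace of `EPE`; by the second, a
`λ`-eigenvector killed by `EPF` satisfies `λ² ξ = λ ξ`, so it vanishes when `λ ≠ 0, 1`.
Swapping `E` with `1 - E` and `λ` with `1 - λ` gives the reverse injection, hence equal ranks.
-/

theorem IsIdempotentElem.block_mul_add_block_mul {R : Type*} [Ring R] {P E : R}
    (hP : IsIdempotentElem P) (hE : IsIdempotentElem E) (X Y : R) :
    X * P * E * (E * P * Y) + X * P * (1 - E) * ((1 - E) * P * Y) = X * P * Y := by
  calc _ = X * (P * (E * E) * P + P * ((1 - E) * (1 - E)) * P) * Y := by noncomm_ring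
    _ = X * (P * P) * Y := by rw [hE.eq, hE.one_sub.eq]; noncomm_ring
    _ = X * P * Y := by rw [hP.eq]

open Module.End

section Eigenspaces

variable {K V : Type*} [Field K] [AddCommGroup V] [Module K V] {P E : Module.End K V}
  (hP : IsIdempotentElem P) (hE : IsIdempotentElem E) {μ : K}
include hP hE

theorem mapsTo_offDiag_eigenspace :
    Set.MapsTo ⇑(E * P * (1 - E)) (eigenspace ((1 - E) * P * (1 - E)) μ : Set V)
      (eigenspace (E * P * E) (1 - μ) : Set V) := by
  intro ξ hξ
  rw [SetLike.mem_coe, mem_eigenspace_iff] at hξ ⊢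
  have h := LinearMap.congr_fun (hP.block_mul_add_block_mul hE E (1 - E)) ξ
  rw [LinearMap.add_apply, Module.End.mul_apply, Module.End.mul_apply (E * P * (1 - E)), hξ,
    map_smul] at h
  rw [eq_sub_of_add_eq h, sub_smul, one_smul]

theorem eq_zero_of_mem_eigenspace_of_offDiag_apply_eq_zero (hμ0 : μ ≠ 0) (hμ1 : μ ≠ 1)
    {ξ : V} (hξ : ξ ∈ eigenspace ((1 - E) * P * (1 - E)) μ) (hξ0 : (E * P * (1 - E)) ξ = 0) :
    ξ = 0 := by
  rw [mem_eigenspace_iff] at hξ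
  have h := LinearMap.congr_fun (hP.block_mul_add_block_mul hE (1 - E) (1 - E)) ξ
  rw [LinearMap.add_apply, Module.End.mul_apply, Module.End.mul_apply ((1 - E) * P * (1 - E)), hξ0,
    map_zero, zero_add, hξ, map_smul, hξ, smul_smul] at h
  by_contra hne
  have hμ : IsIdempotentElem μ := smul_left_injective K hne h
  exact (IsIdempotentElem.iff_eq_zero_or_one.mp hμ).elim hμ0 hμ1

theorem injOn_offDiag_eigenspace (hμ0 : μ ≠ 0) (hμ1 : μ ≠ 1) :
    Set.InjOn ⇑(E * P * (1 - E)) (eigenspace ((1 - E) * P * (1 - E)) μ : Set V) :=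
  LinearMap.disjoint_ker_iff_injOn.mp <| Submodule.disjoint_def.mpr fun _ hξ hξ0 ↦
    eq_zero_of_mem_eigenspace_of_offDiag_apply_eq_zero hP hE hμ0 hμ1 hξ hξ0

theorem rank_eigenspace_corner_le (hμ0 : μ ≠ 0) (hμ1 : μ ≠ 1) :
    Module.rank K (eigenspace ((1 - E) * P * (1 - E)) μ) ≤
      Module.rank K (eigenspace (E * P * E) (1 - μ)) := by
  refine LinearMap.rank_le_of_injective
    ((E * P * (1 - E)).restrict (mapsTo_offDiag_eigenspace hP hE)) fun ξ η h ↦ ?_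
  exact Subtype.ext <| injOn_offDiag_eigenspace hP hE hμ0 hμ1 ξ.2 η.2 (congrArg Subtype.val h)

theorem rank_eigenspace_corner_eq (hμ0 : μ ≠ 0) (hμ1 : μ ≠ 1) :
    Module.rank K (eigenspace ((1 - E) * P * (1 - E)) μ) =
      Module.rank K (eigenspace (E * P * E) (1 - μ)) := by
  refine le_antisymm (rank_eigenspace_corner_le hP hE hμ0 hμ1) ?_
  have h := rank_eigenspace_corner_le hP hE.one_sub (sub_ne_zero.mpr hμ1.symm)
    (sub_eq_self.not.mpr hμ0)
  rwa [sub_sub_cancel, sub_sub_cancel] at h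

end Eigenspaces

theorem ContinuousLinearMap.ker_sub_smul_one_eq_eigenspace {𝕜 M : Type*} [Field 𝕜]
    [TopologicalSpace M] [AddCommGroup M] [IsTopologicalAddGroup M] [Module 𝕜 M]
    [ContinuousConstSMul 𝕜 M] (T : M →L[𝕜] M) (c : 𝕜) :
    LinearMap.ker ((T - c • 1 : M →L[𝕜] M) : M →ₗ[𝕜] M) =
      eigenspace (toLinearMapRingHom T) c := by
  ext ξ
  simp [sub_eq_zero]

theorem stmt4_general {H : Type*} [NormedAddCommGroup H] [InnerProductSpace ℂ H]
    (P E : H →L[ℂ] H) (hP2 : P * P = P) (hE2 : E * E = E)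
    (lam : ℝ) (hlam : lam ∈ Set.Ioo (0 : ℝ) 1) :
    (∀ ξ ∈ LinearMap.ker (((1 - E) * P * (1 - E) - (lam : ℂ) • (1 : H →L[ℂ] H) : H →L[ℂ] H) : H →ₗ[ℂ] H),
        (E * P * (1 - E)) ξ ∈ LinearMap.ker ((E * P * E - ((1 - lam : ℝ) : ℂ) • (1 : H →L[ℂ] H) : H →L[ℂ] H) : H →ₗ[ℂ] H)) ∧
    Set.InjOn (⇑(E * P * (1 - E)))
        (LinearMap.ker (((1 - E) * P * (1 - E) - (lam : ℂ) • (1 : H →L[ℂ] H) : H →L[ℂ] H) : H →ₗ[ℂ] H) : Set H) ∧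
    Module.rank ℂ (LinearMap.ker (((1 - E) * P * (1 - E) - (lam : ℂ) • (1 : H →L[ℂ] H) : H →L[ℂ] H) : H →ₗ[ℂ] H)) =
      Module.rank ℂ (LinearMap.ker ((E * P * E - ((1 - lam : ℝ) : ℂ) • (1 : H →L[ℂ] H) : H →L[ℂ] H) : H →ₗ[ℂ] H)) := by
  have hP := IsIdempotentElem.map hP2 ContinuousLinearMap.toLinearMapRingHom
  have hE := IsIdempotentElem.map hE2 ContinuousLinearMap.toLinearMapRingHom
  have hlam0 : (lam : ℂ) ≠ 0 := mod_cast hlam.1.ne'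
  have hlam1 : (lam : ℂ) ≠ 1 := mod_cast hlam.2.ne
  rw [ContinuousLinearMap.ker_sub_smul_one_eq_eigenspace,
    ContinuousLinearMap.ker_sub_smul_one_eq_eigenspace, Complex.ofReal_sub, Complex.ofReal_one]
  -- `toLinearMapRingHom` commutes with `*`, `-` and `1` definitionally.
  exact ⟨mapsTo_offDiag_eigenspace hP hE, injOn_offDiag_eigenspace hP hE hlam0 hlam1,
    rank_eigenspace_corner_eq hP hE hlam0 hlam1⟩

/-- For an orthogonal projection `P` with block matrix `(x a; a* y)` relative to
`H = H₊ ⊕ H₋` and `λ ∈ (0,1)`, the entry `a` maps the eigenspace `N(y - λ)` injectively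
into the eigenspace `N(x - (1-λ))`, and these eigenspaces have equal dimension. -/
theorem stmt4 {H : Type*} [NormedAddCommGroup H] [InnerProductSpace ℂ H] [CompleteSpace H]
    (P E : H →L[ℂ] H) (hP : IsSelfAdjoint P) (hP2 : P * P = P)
    (hE : IsSelfAdjoint E) (hE2 : E * E = E)
    (lam : ℝ) (hlam : lam ∈ Set.Ioo (0 : ℝ) 1) :
    (∀ ξ ∈ LinearMap.ker (((1 - E) * P * (1 - E) - (lam : ℂ) • (1 : H →L[ℂ] H) : H →L[ℂ] H) : H →ₗ[ℂ] H),
        (E * P * (1 - E)) ξ ∈ LinearMap.ker ((E * P * E - ((1 - lam : ℝ) : ℂ) • (1 : H →L[ℂ] H) : H →L[ℂ] H) : H →ₗ[ℂ] H)) ∧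
    Set.InjOn (⇑(E * P * (1 - E)))
        (LinearMap.ker (((1 - E) * P * (1 - E) - (lam : ℂ) • (1 : H →L[ℂ] H) : H →L[ℂ] H) : H →ₗ[ℂ] H) : Set H) ∧
    Module.rank ℂ (LinearMap.ker (((1 - E) * P * (1 - E) - (lam : ℂ) • (1 : H →L[ℂ] H) : H →L[ℂ] H) : H →ₗ[ℂ] H)) =
      Module.rank ℂ (LinearMap.ker ((E * P * E - ((1 - lam : ℝ) : ℂ) • (1 : H →L[ℂ] H) : H →L[ℂ] H) : H →ₗ[ℂ] H)) :=
  stmt4_general P E hP2 hE2 lam hlam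
end

section
/- Let P be an orthogonal projection with block matrix (x a; a* y) relative to H = H₊ ⊕ H₋, and assume a a* is a compact operator. Then every point t in the spectrum of x with t ≠ 0 and t ≠ 1 is an eigenvalue of x, and is of the form t = 1/2 + √(1/4 - s²) or t = 1/2 - √(1/4 - s²) for some singular value s ≤ 1/2 of a. -/
/-!
The compression `x = E P E` of the projection `P` satisfies `x - x² = a a*` with
`a = E P (1 - E)`. A real spectral value `t` of the self-adjoint `x` is an approximate
eigenvalue; since `x - x² - (t - t²)` factors through `x - t`, approximate eigenvectors of `x`
for `t` are approximate eigenvectors of the compact operator `a a*` for `t - t² ≠ 0`, so a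
subsequence converges, and its limit is a genuine eigenvector of `x` for `t`. Positivity of
`a a*` makes `t - t² = s²` a square, and solving the quadratic gives `t = 1/2 ± √(1/4 - s²)`.
-/

open Filter Topology

theorem IsStarProjection.compression_sub_mul_self {R : Type*} [Ring R] [StarRing R] {p e : R}
    (hp : IsStarProjection p) (he : IsStarProjection e) :
    e * p * e - e * p * e * (e * p * e) = e * p * (1 - e) * star (e * p * (1 - e)) := by
  have hp2 (z : R) : p * (p * z) = p * z := by rw [← mul_assoc, hp.isIdempotentElem.eq]
  have he2 (z : R) : e * (e * z) = e * z := by rw [← mul_assoc, he.isIdempotentElem.eq]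
  simp only [star_mul, star_sub, hp.isSelfAdjoint.star_eq, he.isSelfAdjoint.star_eq,
    mul_sub, sub_mul, mul_one, mul_assoc, he2, hp2]
  abel

theorem ContinuousLinearMap.exists_seq_norm_eq_one_tendsto_zero {𝕜 E F : Type*} [RCLike 𝕜]
    [NormedAddCommGroup E] [NormedSpace 𝕜 E] [NormedAddCommGroup F] [NormedSpace 𝕜 F]
    (g : E →L[𝕜] F) (hg : ¬ ∃ K, AntilipschitzWith K g) :
    ∃ ξ : ℕ → E, (∀ n, ‖ξ n‖ = 1) ∧ Tendsto (fun n ↦ g (ξ n)) atTop (𝓝 0) := by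
  rw [antilipschitzWith_iff_exists_mul_le_norm] at hg
  push Not at hg
  have (n : ℕ) : ∃ v : E, v ≠ 0 ∧ ‖g v‖ < 1 / ((n : ℝ) + 1) * ‖v‖ := by
    obtain ⟨v, hv⟩ := hg (1 / ((n : ℝ) + 1)) (by positivity)
    exact ⟨v, by rintro rfl; simp at hv, hv⟩
  choose v hv0 hv using this
  refine ⟨fun n ↦ (‖v n‖⁻¹ : 𝕜) • v n, fun n ↦ norm_smul_inv_norm (hv0 n), ?_⟩
  refine squeeze_zero_norm (fun n ↦ ?_) tendsto_one_div_add_atTop_nhds_zero_nat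
  have := norm_pos_iff.mpr (hv0 n)
  rw [map_smul, norm_smul, norm_inv, RCLike.norm_ofReal, abs_norm, inv_mul_le_iff₀ this]
  linarith [hv n]

theorem IsCompactOperator.exists_tendsto_subseq_of_tendsto_sub_smul {𝕜 E : Type*}
    [NontriviallyNormedField 𝕜] [NormedAddCommGroup E] [NormedSpace 𝕜 E] {T : E →L[𝕜] E}
    (hT : IsCompactOperator T) {μ : 𝕜} (hμ : μ ≠ 0) {ξ : ℕ → E} (hξ : ∀ n, ‖ξ n‖ ≤ 1)
    (h : Tendsto (fun n ↦ T (ξ n) - μ • ξ n) atTop (𝓝 0)) :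
    ∃ η : E, ∃ φ : ℕ → ℕ, StrictMono φ ∧ Tendsto (ξ ∘ φ) atTop (𝓝 η) := by
  obtain ⟨K, hK, hTK⟩ := hT.image_closedBall_subset_compact 1
  obtain ⟨w, -, φ, hφ, hw⟩ := hK.tendsto_subseq (x := fun n ↦ T (ξ n))
    (fun n ↦ hTK ⟨ξ n, by simpa using hξ n, rfl⟩)
  refine ⟨μ⁻¹ • w, φ, hφ, ?_⟩
  have hμξ : Tendsto (fun n ↦ μ • ξ (φ n)) atTop (𝓝 w) := by
    simpa using hw.sub (h.comp hφ.tendsto_atTop)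
  simpa [Function.comp_def, smul_smul, inv_mul_cancel₀ hμ] using hμξ.const_smul μ⁻¹

section Hilbert

variable {𝕜 E : Type*} [RCLike 𝕜] [NormedAddCommGroup E] [InnerProductSpace 𝕜 E]

theorem IsSelfAdjoint.isUnit_of_antilipschitz [CompleteSpace E] {f : E →L[𝕜] E}
    (hf : IsSelfAdjoint f) {K : NNReal} (hK : AntilipschitzWith K f) : IsUnit f := by
  rw [ContinuousLinearMap.isUnit_iff_bijective,
    ContinuousLinearMap.bijective_iff_dense_range_and_antilipschitz]
  refine ⟨?_, K, hK⟩
  rw [Submodule.topologicalClosure_eq_top_iff, ContinuousLinearMap.orthogonal_range,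
    hf.adjoint_eq]
  exact LinearMap.ker_eq_bot.mpr hK.injective

theorem IsSelfAdjoint.exists_seq_norm_eq_one_tendsto_apply_sub_smul [CompleteSpace E]
    {x : E →L[𝕜] E} (hx : IsSelfAdjoint x) {t : ℝ} (ht : (t : 𝕜) ∈ spectrum 𝕜 x) :
    ∃ ξ : ℕ → E, (∀ n, ‖ξ n‖ = 1) ∧ Tendsto (fun n ↦ x (ξ n) - (t : 𝕜) • ξ n) atTop (𝓝 0) := by
  have hg : IsSelfAdjoint (x - (t : 𝕜) • 1) := hx.sub (.smul (RCLike.conj_ofReal t) (.one _))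
  refine (x - (t : 𝕜) • 1).exists_seq_norm_eq_one_tendsto_zero fun ⟨K, hK⟩ ↦
    spectrum.mem_iff.mp ht ?_
  rw [Algebra.algebraMap_eq_smul_one, ← neg_sub]
  exact (hg.isUnit_of_antilipschitz hK).neg

theorem IsSelfAdjoint.exists_eigenvector_of_isCompactOperator_sub_mul_self [CompleteSpace E]
    {x : E →L[𝕜] E} (hx : IsSelfAdjoint x) (hT : IsCompactOperator (x - x * x)) {t : ℝ}
    (ht : (t : 𝕜) ∈ spectrum 𝕜 x) (ht0 : t ≠ 0) (ht1 : t ≠ 1) :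
    ∃ ξ : E, ‖ξ‖ = 1 ∧ x ξ = (t : 𝕜) • ξ := by
  obtain ⟨ξ, hξ, hxξ⟩ := hx.exists_seq_norm_eq_one_tendsto_apply_sub_smul ht
  have hμ : ((t - t ^ 2 : ℝ) : 𝕜) ≠ 0 := by
    rw [Ne, RCLike.ofReal_eq_zero, show t - t ^ 2 = t * (1 - t) by ring]
    exact mul_ne_zero ht0 (sub_ne_zero.mpr (Ne.symm ht1))
  -- `x - x² - (t - t²) = ((1 - t) - x) (x - t)`
  have hTξ : Tendsto (fun n ↦ (x - x * x) (ξ n) - ((t - t ^ 2 : ℝ) : 𝕜) • ξ n) atTop (𝓝 0) := by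
    have := (((1 - t : ℝ) : 𝕜) • (1 : E →L[𝕜] E) - x).continuous.tendsto 0 |>.comp hxξ
    convert this using 2 with n
    · simp only [Function.comp_apply, sub_apply, mul_apply_eq_comp, smul_apply, one_apply_eq_self,
        map_sub, map_smul]
      push_cast
      module
    · simp
  obtain ⟨η, φ, hφ, hη⟩ :=
    hT.exists_tendsto_subseq_of_tendsto_sub_smul hμ (fun n ↦ (hξ n).le) hTξ
  refine ⟨η, ?_, ?_⟩
  · exact tendsto_nhds_unique hη.norm (by simp [hξ])
  · rw [← sub_eq_zero]
    refine tendsto_nhds_unique ?_ (hxξ.comp hφ.tendsto_atTop)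
    exact ((x.continuous.sub (continuous_const_smul _)).tendsto η).comp hη

theorem ContinuousLinearMap.IsPositive.nonneg_of_apply_eq_smul {T : E →L[𝕜] E}
    (hT : T.IsPositive) {ξ : E} (hξ : ξ ≠ 0) {μ : ℝ} (h : T ξ = (μ : 𝕜) • ξ) : 0 ≤ μ := by
  have := hT.re_inner_nonneg_left ξ
  rw [h, inner_smul_left, RCLike.conj_ofReal, RCLike.re_ofReal_mul, inner_self_eq_norm_sq] at this
  exact nonneg_of_mul_nonneg_left this (by positivity)

end Hilbert

theorem eq_half_add_sqrt_or_eq_half_sub_sqrt {t s : ℝ} (h : s ^ 2 = t - t ^ 2) :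
    t = 1 / 2 + √(1 / 4 - s ^ 2) ∨ t = 1 / 2 - √(1 / 4 - s ^ 2) := by
  rw [h, show 1 / 4 - (t - t ^ 2) = (t - 1 / 2) ^ 2 by ring, Real.sqrt_sq_eq_abs]
  rcases abs_choice (t - 1 / 2) with h | h <;> rw [h]
  · left; ring
  · right; ring

/-- Let `P` be an orthogonal projection with block matrix `(x a; a* y)` relative to
`H = H₊ ⊕ H₋`, with `a a*` compact. Then every point `t ≠ 0, 1` of the spectrum of `x`
is an eigenvalue of `x`, of the form `t = 1/2 ± √(1/4 - s²)` for some singular value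
`s ≤ 1/2` of `a` (i.e. `s ≥ 0` and `s²` is an eigenvalue of `a a*`). -/
theorem stmt5 {H : Type*} [NormedAddCommGroup H] [InnerProductSpace ℂ H] [CompleteSpace H]
    (P E : H →L[ℂ] H) (hP : IsSelfAdjoint P) (hP2 : P * P = P)
    (hE : IsSelfAdjoint E) (hE2 : E * E = E)
    (hcpt : IsCompactOperator ⇑((E * P * (1 - E)) * star (E * P * (1 - E))))
    (t : ℝ) (ht : (t : ℂ) ∈ spectrum ℂ (E * P * E)) (ht0 : t ≠ 0) (ht1 : t ≠ 1) :
    (∃ ξ : H, ξ ≠ 0 ∧ (E * P * E) ξ = (t : ℂ) • ξ) ∧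
    ∃ s : ℝ, 0 ≤ s ∧ s ≤ 1 / 2 ∧
      (∃ η : H, η ≠ 0 ∧ ((E * P * (1 - E)) * star (E * P * (1 - E))) η = ((s ^ 2 : ℝ) : ℂ) • η) ∧
      (t = 1 / 2 + Real.sqrt (1 / 4 - s ^ 2) ∨ t = 1 / 2 - Real.sqrt (1 / 4 - s ^ 2)) := by
  set x := E * P * E
  set a := E * P * (1 - E)
  have hx : IsSelfAdjoint x := by simpa [hE.star_eq] using hP.conjugate E
  have hxa : x - x * x = a * star a :=
    (IsStarProjection.mk hP2 hP).compression_sub_mul_self ⟨hE2, hE⟩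
  clear_value x a
  obtain ⟨ξ, hξ, hxξ⟩ : ∃ ξ, ‖ξ‖ = 1 ∧ x ξ = (t : ℂ) • ξ :=
    hx.exists_eigenvector_of_isCompactOperator_sub_mul_self (hxa ▸ hcpt) ht ht0 ht1
  have hξ0 : ξ ≠ 0 := norm_ne_zero_iff.mp (by simp [hξ])
  have haξ : (a * star a) ξ = ((t - t ^ 2 : ℝ) : ℂ) • ξ := by
    rw [← hxa, sub_apply, mul_apply_eq_comp, hxξ, map_smul, hxξ, smul_smul, ← sub_smul]
    congr 1
    push_cast
    ring
  have ha : (a * star a).IsPositive :=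
    (ContinuousLinearMap.nonneg_iff_isPositive _).mp (mul_star_self_nonneg a)
  have hμ : 0 ≤ t - t ^ 2 := ha.nonneg_of_apply_eq_smul hξ0 haξ
  refine ⟨⟨ξ, hξ0, hxξ⟩, √(t - t ^ 2), Real.sqrt_nonneg _,
    Real.sqrt_le_iff.mpr ⟨by norm_num, by nlinarith [sq_nonneg (t - 1 / 2)]⟩,
    ⟨ξ, hξ0, by rwa [Real.sq_sqrt hμ]⟩, eq_half_add_sqrt_or_eq_half_sub_sqrt (Real.sq_sqrt hμ)⟩
end

section
/- Let P, Q be orthogonal projections on a Hilbert space H with ‖Q - P‖ < 1. Then S = QP + (1-Q)(1-P) is invertible, and the unitary part U of the polar decomposition S = U|S| satisfies U P U* = Q. -/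
set_option maxHeartbeats 1000000 in
set_option synthInstance.maxHeartbeats 1000000 in
/-- If `P`, `Q` are orthogonal projections with `‖Q - P‖ < 1`, then
`S = QP + (1-Q)(1-P)` is invertible, and the unitary part `U` of the polar decomposition
`S = U |S|` (where `R = |S|` is the positive operator with `R² = S*S`) satisfies
`U P U* = Q`. -/
theorem stmt13 {H : Type*} [NormedAddCommGroup H] [InnerProductSpace ℂ H] [CompleteSpace H]
    (P Q : H →L[ℂ] H) (hP : IsSelfAdjoint P) (hP2 : P * P = P)
    (hQ : IsSelfAdjoint Q) (hQ2 : Q * Q = Q)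
    (hnorm : ‖Q - P‖ < 1) :
    IsUnit (Q * P + (1 - Q) * (1 - P)) ∧
      ∀ R U : H →L[ℂ] H, R.IsPositive →
        R * R = star (Q * P + (1 - Q) * (1 - P)) * (Q * P + (1 - Q) * (1 - P)) →
        Q * P + (1 - Q) * (1 - P) = U * R →
        (star U * U = 1 ∧ U * star U = 1 ∧ U * P * star U = Q) := by
  set S : H →L[ℂ] H := Q * P + (1 - Q) * (1 - P) with hS_def
  set V : H →L[ℂ] H := 2 * P - 1 with hV_def
  -- V is a selfadjoint involution
  have hVsa : star V = V := by
    have h2 : (2 : H →L[ℂ] H) * P = P + P := two_mul P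
    rw [hV_def, h2, star_sub, star_one, star_add, hP.star_eq]
  have hV2 : V * V = 1 := by
    have : V * V = 4 * (P * P) - 4 * P + 1 := by rw [hV_def]; noncomm_ring
    rw [this, hP2]; noncomm_ring
  -- S = 1 + (Q - P) * V with small perturbation
  have hS_eq : S = 1 - (-((Q - P) * V)) := by
    have h1 : (Q - P) * V = 2 * (Q * P) - Q - 2 * (P * P) + P := by
      rw [hV_def]; noncomm_ring
    rw [hS_def, h1, hP2]; noncomm_ring
  have hVnorm : ‖V‖ ≤ 1 := by
    have h1 : ‖V‖ * ‖V‖ = ‖V * V‖ := by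
      rw [← CStarRing.norm_star_mul_self, hVsa]
    rw [hV2] at h1
    have h2 : ‖(1 : H →L[ℂ] H)‖ ≤ 1 := ContinuousLinearMap.norm_id_le
    nlinarith [norm_nonneg V]
  have hTnorm : ‖-((Q - P) * V)‖ < 1 := by
    rw [norm_neg]
    calc ‖(Q - P) * V‖ ≤ ‖Q - P‖ * ‖V‖ := norm_mul_le _ _
      _ ≤ ‖Q - P‖ * 1 := by
          exact mul_le_mul_of_nonneg_left hVnorm (norm_nonneg _)
      _ < 1 := by simpa using hnorm
  have hSunit : IsUnit S := by
    rw [hS_eq]; exact (Units.oneSub _ hTnorm).isUnit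
  -- algebraic identities
  have h1P : (1 - P) * P = 0 := by rw [sub_mul, one_mul, hP2, sub_self]
  have hQ1 : Q * (1 - Q) = 0 := by rw [mul_sub, mul_one, hQ2, sub_self]
  have hSP : S * P = Q * S := by
    calc S * P = Q * (P * P) + (1 - Q) * ((1 - P) * P) := by rw [hS_def]; noncomm_ring
      _ = Q * P := by rw [hP2, h1P, mul_zero, add_zero]
      _ = (Q * Q) * P + (Q * (1 - Q)) * (1 - P) := by rw [hQ2, hQ1, zero_mul, add_zero]
      _ = Q * S := by rw [hS_def]; noncomm_ring
  have hPS : P * star S = star S * Q := by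
    have h := congrArg star hSP
    rwa [star_mul, star_mul, hP.star_eq, hQ.star_eq] at h
  have hAP : (star S * S) * P = P * (star S * S) := by
    calc (star S * S) * P = star S * (S * P) := by rw [mul_assoc]
      _ = star S * (Q * S) := by rw [hSP]
      _ = (star S * Q) * S := by rw [mul_assoc]
      _ = (P * star S) * S := by rw [hPS]
      _ = P * (star S * S) := by rw [mul_assoc]
  have hAV : (star S * S) * V = V * (star S * S) := by
    calc (star S * S) * V = 2 * ((star S * S) * P) - (star S * S) := by rw [hV_def]; noncomm_ring
      _ = 2 * (P * (star S * S)) - (star S * S) := by rw [hAP]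
      _ = V * (star S * S) := by rw [hV_def]; noncomm_ring
  refine ⟨hSunit, ?_⟩
  intro R U hR hR2 hSU
  have hR0 : 0 ≤ R := (ContinuousLinearMap.nonneg_iff_isPositive R).mpr hR
  have hRsa : star R = R := hR.isSelfAdjoint.star_eq
  -- V R V is a positive square root of S* S
  have hVRV0 : 0 ≤ V * R * V := by
    have := star_left_conjugate_nonneg hR0 V
    rwa [hVsa] at this
  have hVRVsq : (V * R * V) * (V * R * V) = star S * S := by
    calc (V * R * V) * (V * R * V) = V * (R * (V * V) * R) * V := by noncomm_ring
      _ = V * (R * R) * V := by rw [hV2]; noncomm_ring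
      _ = V * (star S * S) * V := by rw [hR2]
      _ = (star S * S) * (V * V) := by rw [← hAV, mul_assoc]
      _ = star S * S := by rw [hV2, mul_one]
  have hsqrt1 : CFC.sqrt (star S * S) = R := CFC.sqrt_unique hR2 hR0
  have hsqrt2 : CFC.sqrt (star S * S) = V * R * V := CFC.sqrt_unique hVRVsq hVRV0
  have hVRV : V * R * V = R := hsqrt2.symm.trans hsqrt1
  have hRV : R * V = V * R := by
    conv_lhs => rw [← hVRV]
    rw [mul_assoc, mul_assoc, hV2, mul_one]
  have hcancel : ∀ X Y : H →L[ℂ] H, X + X = Y + Y → X = Y := by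
    intro X Y h
    have h2 : (2 : ℂ) • X = (2 : ℂ) • Y := by rw [two_smul, two_smul]; exact h
    exact smul_right_injective (H →L[ℂ] H) two_ne_zero h2
  have hRP : R * P = P * R := by
    apply hcancel _ _ ?_
    have e1 : R * P + R * P = R * V + R := by rw [hV_def]; noncomm_ring
    have e2 : P * R + P * R = V * R + R := by rw [hV_def]; noncomm_ring
    rw [e1, e2, hRV]
  -- R is invertible
  have hAunit : IsUnit (star S * S) := hSunit.star.mul hSunit
  obtain ⟨a, ha⟩ := hAunit
  have hRa : Commute R (↑a : H →L[ℂ] H) := by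
    rw [ha, ← hR2]; exact (Commute.refl R).mul_right (Commute.refl R)
  have hRB : Commute R (↑a⁻¹ : H →L[ℂ] H) := hRa.units_inv_right
  set B : H →L[ℂ] H := ↑a⁻¹ with hB_def
  have hAB : (star S * S) * B = 1 := by rw [hB_def, ← ha]; exact a.mul_inv
  have hBA : B * (star S * S) = 1 := by rw [hB_def, ← ha]; exact a.inv_mul
  set W : H →L[ℂ] H := R * B with hW_def
  have hRW : R * W = 1 := by
    rw [hW_def, ← mul_assoc, hR2, hAB]
  have hWR : W * R = 1 := by
    rw [hW_def, mul_assoc, ← hRB.eq, ← mul_assoc, hR2, hAB]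
  -- U = S * W
  have hUeq : U = S * W := by
    calc U = U * (R * W) := by rw [hRW, mul_one]
      _ = (U * R) * W := by rw [mul_assoc]
      _ = S * W := by rw [← hSU]
  -- star B = B, star W = W
  have hAsa : star (star S * S) = star S * S := by rw [star_mul, star_star]
  have hBsa : star B = B := by
    have h1 : star B * (star S * S) = 1 := by
      have := congrArg star hAB
      rwa [star_mul, hAsa, star_one] at this
    calc star B = star B * ((star S * S) * B) := by rw [hAB, mul_one]
      _ = (star B * (star S * S)) * B := (mul_assoc _ _ _).symm
      _ = B := by rw [h1, one_mul]
  have hWsa : star W = W := by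
    rw [hW_def, star_mul, hBsa, hRsa, hRB.eq]
  -- star U * U = 1
  have hUU : star U * U = 1 := by
    have hWA : W * (star S * S) = R := by
      rw [hW_def, mul_assoc, hBA, mul_one]
    calc star U * U = (star W * star S) * (S * W) := by rw [hUeq, star_mul]
      _ = W * (star S * S) * W := by rw [hWsa]; noncomm_ring
      _ = R * W := by rw [hWA]
      _ = 1 := hRW
  have hWunit : IsUnit W := ⟨⟨W, R, hWR, hRW⟩, rfl⟩
  have hUunit : IsUnit U := by rw [hUeq]; exact hSunit.mul hWunit
  have hUsU : U * star U = 1 := by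
    obtain ⟨u, hu⟩ := hUunit
    have hsU : star U = ↑u⁻¹ := by
      calc star U = star U * (↑u * ↑u⁻¹) := by rw [u.mul_inv, mul_one]
        _ = (star U * U) * ↑u⁻¹ := by rw [hu, mul_assoc]
        _ = ↑u⁻¹ := by rw [hUU, one_mul]
    rw [hsU, ← hu]; exact u.mul_inv
  refine ⟨hUU, hUsU, ?_⟩
  have hPB : Commute P B := by
    have hPa : Commute P (↑a : H →L[ℂ] H) := by rw [ha]; exact hAP.symm
    exact hPa.units_inv_right
  have hPR : Commute P R := hRP.symm
  have hPW : Commute P W := hPR.mul_right hPB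
  have hUP : U * P = Q * U := by
    calc U * P = S * (W * P) := by rw [hUeq, mul_assoc]
      _ = S * (P * W) := by rw [← hPW.eq]
      _ = (S * P) * W := by rw [mul_assoc]
      _ = (Q * S) * W := by rw [hSP]
      _ = Q * U := by rw [hUeq, mul_assoc]
  calc U * P * star U = Q * (U * star U) := by rw [hUP, mul_assoc]
    _ = Q := by rw [hUsU, mul_one]
end

section
/- Let P be an orthogonal projection and X = X* a P-codiagonal bounded operator (PXP = 0 = (1-P)X(1-P)). Then P - e^{iX} P e^{-iX} = -i·sinc(X)·[P, X]·e^{-iX}, where sinc is the entire function sinc(t) = sin(t)/t; equivalently, [P, e^{iX}] = i·sinc(X)·[P, X]. -/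
variable {H : Type*} [NormedAddCommGroup H] [InnerProductSpace ℂ H] [CompleteSpace H]

/-- The operator `sinc(X) = Σ_{n≥0} (-1)^n X^(2n) / (2n+1)!`, given by the entire
function `sinc(t) = sin(t)/t`. -/
noncomputable def sincOp (X : H →L[ℂ] H) : H →L[ℂ] H :=
  ∑' n : ℕ, (((-1 : ℂ) ^ n / ((2 * n + 1).factorial : ℂ)) • X ^ (2 * n))

/-!
Codiagonality of `X` with respect to `P` yields the relation `P X + X P = X`, which makes
`P` commute with `X²` and hence with all even powers of `X`, while `[P, X^(2m+1)] = X^(2m) [P, X]`.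
In the exponential series of `iX` the even terms thus drop out of `[P, e^{iX}]`, and the odd ones,
with `i^(2m+1) = i (-1)^m`, resum to `i sinc(X) [P, X]`. Multiplying on the right by
`e^{-iX} = (e^{iX})⁻¹` gives the first identity.
-/

open NormedSpace Complex Nat

section Codiagonal

variable {R : Type*} [Ring R] {P X : R}

theorem mul_add_mul_eq_self_of_codiagonal (hcd1 : P * X * P = 0)
    (hcd2 : (1 - P) * X * (1 - P) = 0) : P * X + X * P = X :=
  calc P * X + X * P = X - (1 - P) * X * (1 - P) + P * X * P := by noncomm_ring
    _ = X := by rw [hcd1, hcd2, sub_zero, add_zero]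

variable (hPX : P * X + X * P = X)
include hPX

theorem commute_sq_of_mul_add_mul_eq_self : Commute P (X ^ 2) :=
  calc P * X ^ 2 = (P * X + X * P) * X - X * (P * X + X * P) + X ^ 2 * P := by noncomm_ring
    _ = X ^ 2 * P := by rw [hPX, sub_self, zero_add]

theorem commute_pow_two_mul_of_mul_add_mul_eq_self (m : ℕ) : Commute P (X ^ (2 * m)) := by
  rw [pow_mul]
  exact (commute_sq_of_mul_add_mul_eq_self hPX).pow_right m

theorem mul_pow_sub_pow_mul_of_mul_add_mul_eq_self (m : ℕ) :
    P * X ^ (2 * m + 1) - X ^ (2 * m + 1) * P = X ^ (2 * m) * (P * X - X * P) := by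
  rw [pow_succ, ← mul_assoc, (commute_pow_two_mul_of_mul_add_mul_eq_self hPX m).eq]
  noncomm_ring

end Codiagonal

theorem Summable.mul_tsum_sub_tsum_mul {ι α : Type*} [Ring α] [TopologicalSpace α]
    [IsTopologicalRing α] [T2Space α] {f : ι → α} (hf : Summable f) (a : α) :
    a * ∑' i, f i - (∑' i, f i) * a = ∑' i, (a * f i - f i * a) := by
  rw [← hf.tsum_mul_left, ← hf.tsum_mul_right, (hf.mul_left a).tsum_sub (hf.mul_right a)]

theorem tsum_eq_tsum_odd_of_forall_even_eq_zero {α : Type*} [AddCommMonoid α]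
    [TopologicalSpace α] {f : ℕ → α} (h : ∀ m, f (2 * m) = 0) :
    ∑' n, f n = ∑' m, f (2 * m + 1) := by
  have hodd : Function.Injective fun m : ℕ => 2 * m + 1 := fun a b hab => by simpa using hab
  refine (hodd.tsum_eq ?_).symm
  intro n hn
  obtain ⟨m, rfl | rfl⟩ := Nat.even_or_odd' n
  · exact absurd (h m) hn
  · exact ⟨m, rfl⟩

theorem exp_mul_exp_neg {A : Type*} (𝕂 : Type*) [RCLike 𝕂] [NormedRing A] [NormedAlgebra 𝕂 A]
    [CompleteSpace A] (x : A) :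
    exp x * exp (-x) = 1 := by
  have hball (y : A) : y ∈ Metric.eball 0 (expSeries 𝕂 A).radius :=
    (expSeries_radius_eq_top 𝕂 A).symm ▸ edist_lt_top _ _
  rw [← exp_add_of_commute_of_mem_ball (Commute.refl x).neg_right (hball x) (hball _),
    add_neg_cancel, NormedSpace.exp_zero]

variable {A : Type*} [NormedRing A] [NormedAlgebra ℂ A] [CompleteSpace A]

theorem summable_sinc_series (x : A) :
    Summable fun n : ℕ => ((-1 : ℂ) ^ n / ((2 * n + 1)! : ℂ)) • x ^ (2 * n) := by
  refine .of_norm_bounded ((norm_expSeries_summable' (𝕂 := ℂ) x).comp_injective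
    (mul_right_injective₀ two_ne_zero)) fun n => ?_
  simp only [Function.comp_apply, norm_smul]
  gcongr
  simp only [norm_div, norm_pow, norm_neg, norm_one, one_pow, one_div, norm_inv, norm_natCast]
  gcongr
  exact Nat.le_succ _

theorem commutator_exp_I_smul_of_mul_add_mul_eq_self {P X : A} (hPX : P * X + X * P = X) :
    P * exp (I • X) - exp (I • X) * P =
      I • ((∑' n : ℕ, ((-1 : ℂ) ^ n / ((2 * n + 1)! : ℂ)) • X ^ (2 * n)) * (P * X - X * P)) := by
  have hterm : ∀ n : ℕ, P * ((n !⁻¹ : ℂ) • (I • X) ^ n) - ((n !⁻¹ : ℂ) • (I • X) ^ n) * P =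
      ((n !⁻¹ : ℂ) * I ^ n) • (P * X ^ n - X ^ n * P) := fun n => by
    simp only [smul_pow, mul_smul_comm, smul_mul_assoc, smul_smul, smul_sub]
  have hodd : ∀ m : ℕ, (((2 * m + 1)! ⁻¹ : ℂ) * I ^ (2 * m + 1)) •
      (P * X ^ (2 * m + 1) - X ^ (2 * m + 1) * P) =
      I • ((((-1 : ℂ) ^ m / ((2 * m + 1)! : ℂ)) • X ^ (2 * m)) * (P * X - X * P)) := fun m => by
    rw [mul_pow_sub_pow_mul_of_mul_add_mul_eq_self hPX, pow_succ, pow_mul, I_sq, smul_mul_assoc,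
      smul_smul]
    congr 1
    field_simp
  rw [exp_eq_tsum ℂ, (expSeries_summable' (I • X)).mul_tsum_sub_tsum_mul P, tsum_congr hterm,
    tsum_eq_tsum_odd_of_forall_even_eq_zero fun m => by
      rw [(commute_pow_two_mul_of_mul_add_mul_eq_self hPX m).eq, sub_self, smul_zero],
    tsum_congr hodd, ((summable_sinc_series X).mul_right _).tsum_const_smul,
    (summable_sinc_series X).tsum_mul_right]

theorem stmt17_general (P X : H →L[ℂ] H)
    (hcd1 : P * X * P = 0) (hcd2 : (1 - P) * X * (1 - P) = 0) :
    P - NormedSpace.exp (Complex.I • X) * P * NormedSpace.exp (-(Complex.I • X)) =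
      Complex.I • (sincOp X * (P * X - X * P) * NormedSpace.exp (-(Complex.I • X))) ∧
    P * NormedSpace.exp (Complex.I • X) - NormedSpace.exp (Complex.I • X) * P =
      Complex.I • (sincOp X * (P * X - X * P)) := by
  have hcomm := commutator_exp_I_smul_of_mul_add_mul_eq_self
    (mul_add_mul_eq_self_of_codiagonal hcd1 hcd2)
  have hinv : exp (I • X) * exp (-(I • X)) = 1 := exp_mul_exp_neg ℂ _
  refine ⟨?_, hcomm⟩
  calc P - exp (I • X) * P * exp (-(I • X))
      = (P * exp (I • X) - exp (I • X) * P) * exp (-(I • X)) := by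
        rw [sub_mul, mul_assoc P, hinv, mul_one]
    _ = _ := by rw [hcomm, smul_mul_assoc, sincOp]

/-- If `P` is an orthogonal projection and `X = X*` is `P`-codiagonal, then
`P - e^{iX} P e^{-iX} = i·sinc(X)·[P,X]·e^{-iX}`; equivalently,
`[P, e^{iX}] = i·sinc(X)·[P, X]`. -/
theorem stmt17 (P X : H →L[ℂ] H) (hP : IsSelfAdjoint P) (hP2 : P * P = P)
    (hX : IsSelfAdjoint X)
    (hcd1 : P * X * P = 0) (hcd2 : (1 - P) * X * (1 - P) = 0) :
    P - NormedSpace.exp (Complex.I • X) * P * NormedSpace.exp (-(Complex.I • X)) =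
      Complex.I • (sincOp X * (P * X - X * P) * NormedSpace.exp (-(Complex.I • X))) ∧
    P * NormedSpace.exp (Complex.I • X) - NormedSpace.exp (Complex.I • X) * P =
      Complex.I • (sincOp X * (P * X - X * P)) :=
  stmt17_general P X hcd1 hcd2
end
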